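/- In the Laurent polynomial ring ℤ[x₁,...,x_{d−2}, x_{d−1}^{±1}], define y₁ = x_{d−1}^{−1} + x₁ and y_j = x_{j−1}x_{d−1}^{−1} + x_j for 2 ≤ j ≤ d−1. Then for every n ≥ 1 and 1 ≤ i ≤ d−1, 𝑃̂_d^{(n,i)}(y₁, ..., y_{d−1}) = x_{d−1}^{−n} P_{d−1}^{(n,i−1)}(x₁,...,x_{d−1}) + P_{d−1}^{(n,i)}(x₁,...,x_{d−1}). -/

import Mathlib

/-
Take `x_j = e_j(λ)` for generic `λ = (λ₁,…,λ_{d-1})` and `u = (λ₁⋯λ_{d-1})⁻¹`. Then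
`y_j = e_j(λ, u)` and `e_d(λ, u) = 1`, so the left side is `E_d^{(n,i)}(λ, u)`, which splits,
according to whether `u` is among the chosen variables, as
`u^n E_{d-1}^{(n,i-1)}(λ) + E_{d-1}^{(n,i)}(λ)`. As the `e_j(λ)` are algebraically independent,
this identity in the fraction field of `ℤ[λ]` pulls back to the Laurent polynomial ring
`ℤ[x][x_{d-1}⁻¹]`, and by its universal property it holds in every commutative ring.
-/

open Finset MvPolynomial

/-- The `i`-th elementary symmetric polynomial in `d` variables over `ℤ`. -/
noncomputable def esymmPoly (d i : ℕ) : MvPolynomial (Fin d) ℤ :=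
  ∑ t ∈ Finset.univ.powersetCard i, ∏ j ∈ t, X j

/-- The power elementary symmetric polynomial `E_d^{(n,i)}`. -/
noncomputable def powEsymmPoly (d n i : ℕ) : MvPolynomial (Fin d) ℤ :=
  ∑ t ∈ Finset.univ.powersetCard i, ∏ j ∈ t, X j ^ n

/-- The reduced polynomial obtained by setting the last variable `e_d` equal to `1`. -/
noncomputable def reducePoly (d : ℕ) (P : MvPolynomial (Fin d) ℤ) :
    MvPolynomial (Fin (d - 1)) ℤ :=
  MvPolynomial.aeval
    (fun j : Fin d => if h : j.1 < d - 1 then X (⟨j.1, h⟩ : Fin (d - 1)) else 1) P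

theorem Multiset.esymm_cons_succ {R : Type*} [CommSemiring R] (a : R) (s : Multiset R) (k : ℕ) :
    (a ::ₘ s).esymm (k + 1) = a * s.esymm k + s.esymm (k + 1) := by
  simp only [Multiset.esymm, Multiset.powersetCard_cons, Multiset.map_add, Multiset.sum_add,
    Multiset.map_map, Function.comp_def, Multiset.prod_cons, Multiset.sum_map_mul_left]
  ring

theorem Fin.univ_val_map_snoc {α : Type*} {m : ℕ} (g : Fin m → α) (a : α) :
    (univ : Finset (Fin (m + 1))).val.map (Fin.snoc g a : Fin (m + 1) → α)
      = a ::ₘ (univ : Finset (Fin m)).val.map g := by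
  simp [Fin.univ_castSuccEmb, Function.comp_def]

theorem IsLocalization.lift_injective_of_injective {R S P : Type*} [CommSemiring R]
    [CommSemiring S] [Algebra R S] [CommSemiring P] {M : Submonoid R} [IsLocalization M S]
    {g : R →+* P} (hg : ∀ y : M, IsUnit (g y)) (hinj : Function.Injective g) :
    Function.Injective (IsLocalization.lift hg : S → P) :=
  (IsLocalization.lift_injective_iff hg).2 fun a b =>
    ⟨fun h => by simpa only [IsLocalization.lift_eq] using congrArg (IsLocalization.lift hg) h,
      fun h => congrArg _ (hinj h)⟩

theorem IsLocalization.Away.lift_invSelf {R S P : Type*} [CommSemiring R] [CommSemiring S]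
    [Algebra R S] [CommSemiring P] (x : R) [IsLocalization.Away x S] {g : R →+* P} {u : P}
    (hu : g x * u = 1) :
    IsLocalization.Away.lift x (IsUnit.of_mul_eq_one _ hu) (IsLocalization.Away.invSelf x : S)
      = u := by
  have h := congrArg (IsLocalization.Away.lift x (IsUnit.of_mul_eq_one _ hu))
    (IsLocalization.Away.mul_invSelf (S := S) x)
  rw [map_mul, IsLocalization.Away.lift_eq, map_one, ← hu] at h
  exact (IsUnit.of_mul_eq_one _ hu).mul_left_cancel h

theorem MvPolynomial.ringHom_aeval_int {σ R S : Type*} [CommRing R] [CommRing S] [Algebra ℤ R]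
    [Algebra ℤ S] (f : R →+* S) (g : σ → R) (p : MvPolynomial σ ℤ) :
    f (aeval g p) = aeval (f ∘ g) p := by
  rw [map_aeval, aeval_def, coe_eval₂Hom]
  congr 1
  exact Subsingleton.elim _ _

theorem aeval_esymmPoly_injective (m : ℕ) :
    Function.Injective
      (aeval (fun j : Fin m => esymmPoly m (j.1 + 1)) : MvPolynomial (Fin m) ℤ → _) := by
  intro p q h
  refine esymmAlgHom_fin_injective ℤ le_rfl (Subtype.ext ?_)
  rwa [esymmAlgHom_apply, esymmAlgHom_apply]

theorem esymmPoly_eq_zero_of_lt {d k : ℕ} (h : d < k) : esymmPoly d k = 0 := by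
  rw [esymmPoly, powersetCard_eq_empty.2 (by simpa using h), sum_empty]

/-- The paper's `y` (indexed from `0`), with `u` standing for `x_{d-1}⁻¹`. -/
def laurentVars {R : Type*} [CommRing R] {m : ℕ} (x : Fin m → R) (u : R) : Fin m → R :=
  fun j => (if h : j.1 = 0 then u else x ⟨j.1 - 1, by omega⟩ * u) + x j

theorem RingHom.comp_laurentVars {R S : Type*} [CommRing R] [CommRing S] (f : R →+* S) {m : ℕ}
    (x : Fin m → R) (u : R) : f ∘ laurentVars x u = laurentVars (f ∘ x) (f u) := by
  ext j
  by_cases h : j.1 = 0 <;> simp [laurentVars, h]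

section Evaluation

variable {S : Type*} [CommRing S] [Algebra ℤ S]

theorem aeval_esymmPoly {d : ℕ} (g : Fin d → S) (k : ℕ) :
    aeval g (esymmPoly d k) = ((univ : Finset (Fin d)).val.map g).esymm k :=
  aeval_esymm_eq_multiset_esymm (Fin d) ℤ k g

theorem aeval_powEsymmPoly {d : ℕ} (g : Fin d → S) (n k : ℕ) :
    aeval g (powEsymmPoly d n k) = ((univ : Finset (Fin d)).val.map (g · ^ n)).esymm k := by
  rw [Finset.esymm_map_val]
  simp [powEsymmPoly]

theorem aeval_esymmPoly_snoc {m : ℕ} (g : Fin m → S) (a : S) (k : ℕ) :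
    aeval (Fin.snoc g a : Fin (m + 1) → S) (esymmPoly (m + 1) (k + 1))
      = a * aeval g (esymmPoly m k) + aeval g (esymmPoly m (k + 1)) := by
  simp only [aeval_esymmPoly, Fin.univ_val_map_snoc, Multiset.esymm_cons_succ]

theorem aeval_powEsymmPoly_snoc {m : ℕ} (g : Fin m → S) (a : S) (n k : ℕ) :
    aeval (Fin.snoc g a : Fin (m + 1) → S) (powEsymmPoly (m + 1) n (k + 1))
      = a ^ n * aeval g (powEsymmPoly m n k) + aeval g (powEsymmPoly m n (k + 1)) := by
  have : (fun j => (Fin.snoc g a : Fin (m + 1) → S) j ^ n) = Fin.snoc (g · ^ n) (a ^ n) := by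
    ext j; refine Fin.lastCases ?_ (fun j => ?_) j <;> simp
  simp only [aeval_powEsymmPoly, this, Fin.univ_val_map_snoc, Multiset.esymm_cons_succ]

theorem aeval_reducePoly {m : ℕ} (y : Fin (m + 1) → S) (P : MvPolynomial (Fin (m + 2)) ℤ) :
    aeval y (reducePoly (m + 2) P) = aeval (Fin.snoc y 1 : Fin (m + 2) → S) P := by
  rw [reducePoly, comp_aeval_apply]
  congr 1
  ext j; refine Fin.lastCases ?_ (fun j => ?_) j <;> simp [Nat.lt_succ_iff.mp j.isLt]

theorem aeval_esymmPoly_snoc_eq_laurentVars {m : ℕ} (l : Fin (m + 1) → S) (v : S)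
    (j : Fin (m + 1)) :
    aeval (Fin.snoc l v : Fin (m + 2) → S) (esymmPoly (m + 2) (j.1 + 1))
      = laurentVars (fun i : Fin (m + 1) => aeval l (esymmPoly (m + 1) (i.1 + 1))) v j := by
  rw [aeval_esymmPoly_snoc, laurentVars]
  obtain ⟨_ | i, _⟩ := j
  · simp [esymmPoly]
  · simp [mul_comm]

end Evaluation

section PowerElementary

variable {m n k : ℕ} {P : MvPolynomial (Fin (m + 2)) ℤ}
  {Q₁ Q₂ : MvPolynomial (Fin (m + 1)) ℤ}
  (hP : aeval (fun j : Fin (m + 2) => esymmPoly (m + 2) (j.1 + 1)) P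
    = powEsymmPoly (m + 2) n (k + 1))
  (hQ₁ : aeval (fun j : Fin (m + 1) => esymmPoly (m + 1) (j.1 + 1)) Q₁
    = powEsymmPoly (m + 1) n k)
  (hQ₂ : aeval (fun j : Fin (m + 1) => esymmPoly (m + 1) (j.1 + 1)) Q₂
    = powEsymmPoly (m + 1) n (k + 1))
include hP hQ₁ hQ₂

theorem aeval_reducePoly_laurentVars_esymm {S : Type*} [CommRing S] [Algebra ℤ S]
    (l : Fin (m + 1) → S) (v : S) (hv : aeval l (esymmPoly (m + 1) (m + 1)) * v = 1) :
    aeval (laurentVars (fun i : Fin (m + 1) => aeval l (esymmPoly (m + 1) (i.1 + 1))) v)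
        (reducePoly (m + 2) P)
      = v ^ n * aeval (fun i : Fin (m + 1) => aeval l (esymmPoly (m + 1) (i.1 + 1))) Q₁
        + aeval (fun i : Fin (m + 1) => aeval l (esymmPoly (m + 1) (i.1 + 1))) Q₂ := by
  have hlast : aeval (Fin.snoc l v : Fin (m + 2) → S) (esymmPoly (m + 2) (m + 2)) = 1 := by
    rw [aeval_esymmPoly_snoc, esymmPoly_eq_zero_of_lt (Nat.lt_succ_self _), map_zero, add_zero,
      mul_comm, hv]
  calc _ = aeval (fun j : Fin (m + 2) => aeval (Fin.snoc l v : Fin (m + 2) → S)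
          (esymmPoly (m + 2) (j.1 + 1))) P := by
        rw [aeval_reducePoly]
        congr 1
        ext j
        refine Fin.lastCases ?_ (fun j => ?_) j
        · simpa using hlast.symm
        · simpa using (aeval_esymmPoly_snoc_eq_laurentVars l v j).symm
    _ = aeval (Fin.snoc l v : Fin (m + 2) → S) (powEsymmPoly (m + 2) n (k + 1)) := by
        rw [← hP, comp_aeval_apply]
    _ = _ := by
        rw [aeval_powEsymmPoly_snoc, ← hQ₁, ← hQ₂, comp_aeval_apply, comp_aeval_apply]

local notation "𝔸" => MvPolynomial (Fin (m + 1)) ℤ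
local notation "𝕃" => Localization.Away (X (Fin.last m) : 𝔸)

theorem aeval_reducePoly_laurentVars_localization :
    aeval (laurentVars (fun j => algebraMap 𝔸 𝕃 (X j))
        (IsLocalization.Away.invSelf (S := 𝕃) (X (Fin.last m) : 𝔸)))
        (reducePoly (m + 2) P)
      = IsLocalization.Away.invSelf (S := 𝕃) (X (Fin.last m) : 𝔸) ^ n
          * aeval (fun j => algebraMap 𝔸 𝕃 (X j)) Q₁
        + aeval (fun j => algebraMap 𝔸 𝕃 (X j)) Q₂ := by
  let l : Fin (m + 1) → FractionRing 𝔸 := fun j => algebraMap 𝔸 _ (X j)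
  let ψ := (algebraMap 𝔸 (FractionRing 𝔸)).comp
    (aeval (R := ℤ) fun j : Fin (m + 1) => esymmPoly (m + 1) (j.1 + 1)).toRingHom
  have hψ : Function.Injective ψ :=
    (IsFractionRing.injective _ _).comp (aeval_esymmPoly_injective (m + 1))
  have hψX (j : Fin (m + 1)) : ψ (X j) = aeval l (esymmPoly (m + 1) (j.1 + 1)) := by
    show algebraMap 𝔸 _ (aeval _ (X j)) = _
    rw [aeval_X, show l = algebraMap 𝔸 _ ∘ X from rfl, aeval_algebraMap_apply,
      aeval_X_left_apply]
  have hunit : IsUnit (ψ (X (Fin.last m))) := ((map_ne_zero_iff ψ hψ).2 (X_ne_zero _)).isUnit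
  let φ := IsLocalization.Away.lift (S := 𝕃) (X (Fin.last m)) hunit
  have hφ : Function.Injective φ := IsLocalization.lift_injective_of_injective _ hψ
  apply hφ
  have hφξ : φ ∘ (fun j => algebraMap 𝔸 𝕃 (X j))
      = fun i => aeval l (esymmPoly (m + 1) (i.1 + 1)) := by
    ext j
    rw [Function.comp_apply, IsLocalization.Away.lift_eq, hψX]
  have hv := congrArg φ (IsLocalization.Away.mul_invSelf (S := 𝕃) (X (Fin.last m) : 𝔸))
  rw [map_mul, map_one, IsLocalization.Away.lift_eq, hψX, Fin.val_last] at hv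
  rw [map_add, map_mul, map_pow, MvPolynomial.ringHom_aeval_int, MvPolynomial.ringHom_aeval_int,
    MvPolynomial.ringHom_aeval_int, RingHom.comp_laurentVars, hφξ]
  exact aeval_reducePoly_laurentVars_esymm hP hQ₁ hQ₂ l _ hv

theorem aeval_reducePoly_laurentVars {R : Type*} [CommRing R] (x : Fin (m + 1) → R) (u : R)
    (hu : x (Fin.last m) * u = 1) :
    aeval (laurentVars x u) (reducePoly (m + 2) P) = u ^ n * aeval x Q₁ + aeval x Q₂ := by
  have hu' : (aeval x : 𝔸 →ₐ[ℤ] R).toRingHom (X (Fin.last m)) * u = 1 := by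
    rwa [AlgHom.toRingHom_eq_coe, RingHom.coe_coe, aeval_X]
  let ρ := IsLocalization.Away.lift (S := 𝕃) _ (IsUnit.of_mul_eq_one _ hu')
  have hρξ : ρ ∘ (fun j => algebraMap 𝔸 _ (X j)) = x := by
    ext j
    simp [ρ]
  have h := congrArg ρ (aeval_reducePoly_laurentVars_localization hP hQ₁ hQ₂)
  rwa [map_add, map_mul, map_pow, MvPolynomial.ringHom_aeval_int, MvPolynomial.ringHom_aeval_int,
    MvPolynomial.ringHom_aeval_int, RingHom.comp_laurentVars, hρξ,
    IsLocalization.Away.lift_invSelf _ hu'] at h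

end PowerElementary

/-- Proposition: `P̂_d^{(n,i)}(y₁,…,y_{d−1}) = x_{d−1}^{−n} P_{d−1}^{(n,i−1)}(x) + P_{d−1}^{(n,i)}(x)`,
stated in an arbitrary commutative ring `R` containing elements `x₁,…,x_{d−1}` together with an
inverse `u` of `x_{d−1}` (this is equivalent to the identity in the Laurent polynomial ring
`ℤ[x₁,…,x_{d−2},x_{d−1}^{±1}]`, by its universal property). -/
theorem stmt7 (d n i : ℕ) (hd : 2 ≤ d) (hi1 : 1 ≤ i)
    (P : MvPolynomial (Fin d) ℤ)
    (hP : MvPolynomial.aeval (fun j : Fin d => esymmPoly d (j.1 + 1)) P = powEsymmPoly d n i)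
    (Q₁ Q₂ : MvPolynomial (Fin (d - 1)) ℤ)
    (hQ₁ : MvPolynomial.aeval (fun j : Fin (d - 1) => esymmPoly (d - 1) (j.1 + 1)) Q₁
        = powEsymmPoly (d - 1) n (i - 1))
    (hQ₂ : MvPolynomial.aeval (fun j : Fin (d - 1) => esymmPoly (d - 1) (j.1 + 1)) Q₂
        = powEsymmPoly (d - 1) n i)
    (R : Type) [CommRing R] (x : Fin (d - 1) → R) (u : R)
    (hu : x (⟨d - 2, by omega⟩ : Fin (d - 1)) * u = 1)
    (y : Fin (d - 1) → R)
    (hy : ∀ j : Fin (d - 1),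
      y j = (if h : j.1 = 0 then u else x (⟨j.1 - 1, by omega⟩ : Fin (d - 1)) * u) + x j) :
    MvPolynomial.aeval y (reducePoly d P)
      = u ^ n * MvPolynomial.aeval x Q₁ + MvPolynomial.aeval x Q₂ := by
  obtain ⟨m, rfl⟩ : ∃ m, d = m + 2 := ⟨d - 2, by omega⟩
  obtain ⟨k, rfl⟩ : ∃ k, i = k + 1 := ⟨i - 1, by omega⟩
  obtain rfl : y = laurentVars x u := funext hy
  exact aeval_reducePoly_laurentVars hP hQ₁ hQ₂ x u hu
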